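/- Let φ : I → ℝ be smooth with φ′(y) ≠ 0, and consider the cylinder S parametrized by Φ(x, y) = (x, y, φ(y)) in M_f, with unit normal η = (1/|φ′(y)|)(1, −ε φ′(y), 0) and second fundamental form h(X, Y) = g_f(∇_X Y, η) on the basis (Φ_x, Φ_y). Then h(Φ_x, Φ_x) = 0 and h(Φ_x, Φ_y) = 0, so the 2×2 matrix of h in the basis (Φ_x, Φ_y) has determinant zero, and moreover the ambient curvature term g_f(R(Φ_x, Φ_y)Φ_y, Φ_x) vanishes; hence (by the Gauss equation) the cylinder S is flat. -/
import Mathlib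


open Matrix

/-- The Walker metric `g_f` of a strict Walker 3-manifold at a point `(x, y, z)`. -/
noncomputable def gf (ε : ℝ) (f : ℝ → ℝ → ℝ) (y z : ℝ) (u v : Fin 3 → ℝ) : ℝ :=
  u 0 * v 2 + u 2 * v 0 + ε * u 1 * v 1 + f y z * u 2 * v 2

/-- The Christoffel symbols of the strict Walker 3-manifold (indices `x=0,y=1,z=2`). -/
noncomputable def Γf (ε : ℝ) (fy fz : ℝ → ℝ → ℝ) (y z : ℝ) (k i j : Fin 3) : ℝ :=
  if k = 0 ∧ ((i = 1 ∧ j = 2) ∨ (i = 2 ∧ j = 1)) then fy y z / 2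
  else if k = 0 ∧ i = 2 ∧ j = 2 then fz y z / 2
  else if k = 1 ∧ i = 2 ∧ j = 2 then -(ε / 2) * fy y z
  else 0

/-- The coordinate partial derivative `∂_dir Γ^k_{ij}` of the Christoffel symbols. -/
noncomputable def DΓf (ε : ℝ) (fyy fyz fzy fzz : ℝ → ℝ → ℝ) (y z : ℝ)
    (dir k i j : Fin 3) : ℝ :=
  if dir = 1 then Γf ε fyy fzy y z k i j
  else if dir = 2 then Γf ε fyz fzz y z k i j
  else 0

/-- The curvature tensor `R(∂_i, ∂_j)∂_k` of the strict Walker 3-manifold. -/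
noncomputable def Rcurv (ε : ℝ) (fy fz fyy fyz fzy fzz : ℝ → ℝ → ℝ) (y z : ℝ)
    (i j k : Fin 3) : Fin 3 → ℝ := fun l =>
  DΓf ε fyy fyz fzy fzz y z i l j k - DΓf ε fyy fyz fzy fzz y z j l i k +
    ∑ m : Fin 3, (Γf ε fy fz y z l i m * Γf ε fy fz y z m j k -
      Γf ε fy fz y z l j m * Γf ε fy fz y z m i k)

/-- The multilinear extension `R(u, v)w` of the curvature tensor. -/
noncomputable def Rext (ε : ℝ) (fy fz fyy fyz fzy fzz : ℝ → ℝ → ℝ) (y z : ℝ)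
    (u v w : Fin 3 → ℝ) : Fin 3 → ℝ := fun l =>
  ∑ i : Fin 3, ∑ j : Fin 3, ∑ k : Fin 3,
    u i * v j * w k * Rcurv ε fy fz fyy fyz fzy fzz y z i j k l

/-- The covariant derivative `∇_{γ'} ξ` along a curve `γ` in the strict Walker
3-manifold. -/
noncomputable def covD (ε : ℝ) (fy fz : ℝ → ℝ → ℝ) (γ ξ : ℝ → Fin 3 → ℝ) (t : ℝ) :
    Fin 3 → ℝ :=
  ![deriv (fun s => ξ s 0) t
      + (1 / 2) * fy (γ t 1) (γ t 2) *
        (ξ t 1 * deriv (fun s => γ s 2) t + ξ t 2 * deriv (fun s => γ s 1) t)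
      + (1 / 2) * fz (γ t 1) (γ t 2) * ξ t 2 * deriv (fun s => γ s 2) t,
    deriv (fun s => ξ s 1) t
      - (ε / 2) * fy (γ t 1) (γ t 2) * ξ t 2 * deriv (fun s => γ s 2) t,
    deriv (fun s => ξ s 2) t]

/-- For the cylinder `S : Φ(x, y) = (x, y, φ(y))` in `M_f` with unit normal
`η = (1/|φ′|)(1, −ε φ′, 0)` and second fundamental form `h(X, Y) = g_f(∇_X Y, η)`,
one has `h(Φ_x, Φ_x) = 0`, `h(Φ_x, Φ_y) = 0`, the matrix of `h` in the basis
`(Φ_x, Φ_y)` has determinant zero, and the ambient curvature term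
`g_f(R(Φ_x, Φ_y)Φ_y, Φ_x)` vanishes; hence (by the Gauss equation) `S` is flat. -/
theorem stmt_11 (ε : ℝ) (hε : ε = 1 ∨ ε = -1) (f fy fz fyy fyz fzy fzz : ℝ → ℝ → ℝ)
    (hf : ContDiff ℝ (⊤ : ℕ∞) (Function.uncurry f))
    (hfy : ∀ y z : ℝ, HasDerivAt (fun t => f t z) (fy y z) y)
    (hfz : ∀ y z : ℝ, HasDerivAt (fun t => f y t) (fz y z) z)
    (hfyy : ∀ y z : ℝ, HasDerivAt (fun t => fy t z) (fyy y z) y)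
    (hfyz : ∀ y z : ℝ, HasDerivAt (fun t => fy y t) (fyz y z) z)
    (hfzy : ∀ y z : ℝ, HasDerivAt (fun t => fz t z) (fzy y z) y)
    (hfzz : ∀ y z : ℝ, HasDerivAt (fun t => fz y t) (fzz y z) z)
    (φ : ℝ → ℝ) (hφ : ContDiff ℝ (⊤ : ℕ∞) φ) (hφ' : ∀ y : ℝ, deriv φ y ≠ 0) :
    ∀ x y : ℝ,
      (fun (η Φx Φy : Fin 3 → ℝ) (Dxx Dxy Dyx Dyy : Fin 3 → ℝ) =>
        gf ε f y (φ y) Dxx η = 0 ∧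
        gf ε f y (φ y) Dxy η = 0 ∧
        Matrix.det !![gf ε f y (φ y) Dxx η, gf ε f y (φ y) Dxy η;
                      gf ε f y (φ y) Dyx η, gf ε f y (φ y) Dyy η] = 0 ∧
        gf ε f y (φ y) (Rext ε fy fz fyy fyz fzy fzz y (φ y) Φx Φy Φy) Φx = 0)
      ((|deriv φ y|)⁻¹ • ![1, -ε * deriv φ y, 0])
      ![1, 0, 0]
      ![0, 1, deriv φ y]
      (covD ε fy fz (fun s => ![s, y, φ y]) (fun _ => ![1, 0, 0]) x)
      (covD ε fy fz (fun s => ![s, y, φ y]) (fun _ => ![0, 1, deriv φ y]) x)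
      (covD ε fy fz (fun s => ![x, s, φ s]) (fun _ => ![1, 0, 0]) y)
      (covD ε fy fz (fun s => ![x, s, φ s]) (fun s => ![0, 1, deriv φ s]) y) := by
  intro x y
  refine ⟨?_, ?_, ?_, ?_⟩ <;>
    simp [covD, gf, Rext, Rcurv, DΓf, Γf, Fin.sum_univ_three,
      Matrix.det_fin_two_of, Matrix.smul_cons, smul_eq_mul] <;> ring
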